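/- Assume conditional parallel trends (CPT) and no anticipation (NA), assume n₀(X) ≥ ε almost surely for some ε > 0, assume m₀ > 0, and let Δg, Δm, Δn : Ω → ℝ be bounded 𝔊-measurable random variables and Δm̄ ∈ ℝ. For r in a neighborhood of 0 on which m₀ + r·Δm̄ ≠ 0 and n₀(X) + r·Δn ≥ ε/2 almost surely, define F(r) := E[ (1{E=e}/(m₀ + r·Δm̄))·(Y_t − Y_0 − g₀ − r·Δg) − (1{E>t}·(m₀(X) + r·Δm)/((m₀ + r·Δm̄)·(n₀(X) + r·Δn)))·(Y_t − Y_0 − g₀ − r·Δg) − θ₀·1{E=e}/(m₀ + r·Δm̄) ]. Then F is differentiable at r = 0 and F′(0) = 0. (Appendix C: Neyman orthogonality of the doubly robust score for CATT(e,l) with respect to the nuisance parameters (g₀, m₀(X), n₀(X), m₀).) -/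

import Mathlib

open MeasureTheory Filter

noncomputable section

/-- Conditional expectation `E[Z | A] := E[Z·1_A] / P(A)` given an event `A`. -/
def cexp {Ω : Type*} [MeasurableSpace Ω] (μ : Measure Ω) (Z : Ω → ℝ) (A : Set Ω) : ℝ :=
  (∫ ω in A, Z ω ∂μ) / (μ A).toReal

/-- Observed outcome `Y_t := Y∞_t + Σ_{e=1}^{T} (Yᵉ_t − Y∞_t)·1{E = e}`. -/
def obsY {Ω : Type*} (T : ℕ) (E : Ω → ℕ) (Ye : ℕ → ℕ → Ω → ℝ) (Yinf : ℕ → Ω → ℝ)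
    (t : ℕ) (ω : Ω) : ℝ :=
  Yinf t ω + ∑ e ∈ Finset.Icc 1 T, (Ye e t ω - Yinf t ω) * (if E ω = e then 1 else 0)

/-- Cohort-specific average treatment effect on the treated,
`CATT(e,l) := E[Yᵉ_{e+l} − Y∞_{e+l} | E = e]`. -/
def CATT {Ω : Type*} [MeasurableSpace Ω] (μ : Measure Ω) (E : Ω → ℕ)
    (Ye : ℕ → ℕ → Ω → ℝ) (Yinf : ℕ → Ω → ℝ) (e : ℕ) (l : ℤ) : ℝ :=
  cexp μ (fun ω => Ye e ((e : ℤ) + l).toNat ω - Yinf ((e : ℤ) + l).toNat ω) {ω | E ω = e}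

/-- Parallel trends in baseline outcome. -/
def PT {Ω : Type*} [MeasurableSpace Ω] (μ : Measure Ω) (T : ℕ) (E : Ω → ℕ)
    (Yinf : ℕ → Ω → ℝ) : Prop :=
  ∀ e ∈ Finset.Icc 1 T, ∀ s ≤ T, ∀ t ≤ T,
    cexp μ (fun ω => Yinf t ω - Yinf s ω) {ω | E ω = e}
      = ∫ ω, (Yinf t ω - Yinf s ω) ∂μ

/-- No anticipatory behavior. -/
def NA {Ω : Type*} [MeasurableSpace Ω] (μ : Measure Ω) (T : ℕ)
    (Ye : ℕ → ℕ → Ω → ℝ) (Yinf : ℕ → Ω → ℝ) : Prop :=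
  ∀ e ∈ Finset.Icc 1 T, ∀ t < e, Ye e t =ᵐ[μ] Yinf t

/-- The σ-algebra generated by the covariates `X`. -/
def sigmaX {Ω 𝒳 : Type*} [m𝒳 : MeasurableSpace 𝒳] (X : Ω → 𝒳) : MeasurableSpace Ω :=
  MeasurableSpace.comap X m𝒳

/-- `g₀ := E[Y∞_t − Y∞_0 | σ(X)]` (a fixed version of the conditional expectation). -/
noncomputable def gZero {Ω 𝒳 : Type*} [MeasurableSpace Ω] [MeasurableSpace 𝒳]
    (μ : Measure Ω) (Yinf : ℕ → Ω → ℝ) (X : Ω → 𝒳) (t : ℕ) : Ω → ℝ :=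
  μ[fun ω => Yinf t ω - Yinf 0 ω | sigmaX X]

/-- `m₀(X) := E[1{E=e} | σ(X)]`. -/
noncomputable def mZeroX {Ω 𝒳 : Type*} [MeasurableSpace Ω] [MeasurableSpace 𝒳]
    (μ : Measure Ω) (E : Ω → ℕ) (X : Ω → 𝒳) (e : ℕ) : Ω → ℝ :=
  μ[fun ω => if E ω = e then (1 : ℝ) else 0 | sigmaX X]

/-- `n₀(X) := E[1{E>t} | σ(X)]`. -/
noncomputable def nZeroX {Ω 𝒳 : Type*} [MeasurableSpace Ω] [MeasurableSpace 𝒳]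
    (μ : Measure Ω) (E : Ω → ℕ) (X : Ω → 𝒳) (t : ℕ) : Ω → ℝ :=
  μ[fun ω => if t < E ω then (1 : ℝ) else 0 | sigmaX X]

/-- Conditional parallel trends in baseline outcome, given `𝔊 = σ(X)`:
`E[(Y∞_t − Y∞_s)·1{E=e} | 𝔊] = E[Y∞_t − Y∞_s | 𝔊]·E[1{E=e} | 𝔊]` a.s. -/
def CPT {Ω 𝒳 : Type*} [MeasurableSpace Ω] [MeasurableSpace 𝒳] (μ : Measure Ω) (T : ℕ)
    (E : Ω → ℕ) (Yinf : ℕ → Ω → ℝ) (X : Ω → 𝒳) : Prop :=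
  ∀ e ∈ Finset.Icc 1 T, ∀ s ≤ T, ∀ t ≤ T,
    μ[fun ω => (Yinf t ω - Yinf s ω) * (if E ω = e then (1 : ℝ) else 0) | sigmaX X]
      =ᵐ[μ] fun ω => (μ[fun ω' => Yinf t ω' - Yinf s ω' | sigmaX X]) ω
        * (mZeroX μ E X e) ω

/-!
Write `R := Y_t − Y_0 − g₀`, `M_r := m₀ + r Δm̄` and `h_r := (m₀(X) + r Δm) / (n₀(X) + r Δn)`,
a bounded `𝔊`-measurable weight for small `r`. The perturbed score is
`M_r⁻¹ [(1{E=e} − h_r 1{E>t}) (R − r Δg) − θ₀ 1{E=e}]`.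
By NA and CPT, `E[1{E=e} R] = θ₀ P(E = e)`, and `E[h 1{E>t} R] = 0` for every bounded
`𝔊`-measurable `h`, because `1{E>t}` is a.s. a sum of later cohort indicators, each satisfying CPT.
Conditioning the remaining term on `𝔊`, the mean of the score is
`−M_r⁻¹ E[(m₀(X) − h_r n₀(X)) r Δg]`, and
`m₀(X) − h_r n₀(X) = r (m₀(X) Δn − Δm n₀(X)) / (n₀(X) + r Δn)`, so the mean is `O(r²)`.
-/

open Asymptotics Topology

theorem hasDerivAt_zero_of_isBigO_sq {E : Type*} [NormedAddCommGroup E] [NormedSpace ℝ E]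
    {f : ℝ → E} (hf : f =O[𝓝 0] fun r => r ^ 2) : HasDerivAt f 0 0 := by
  have hf0 : f 0 = 0 := hf.eq_zero_imp.self_of_nhds (by simp)
  rw [hasDerivAt_iff_isLittleO_nhds_zero]
  simpa [hf0] using hf.trans_isLittleO (isLittleO_pow_id one_lt_two)

theorem abs_add_mul_div_add_mul_le {m n a b r Ca δ : ℝ} (hm : |m| ≤ 1) (ha : |a| ≤ Ca)
    (hδ : 0 < δ) (hnr : δ ≤ n + r * b) : |(m + r * a) / (n + r * b)| ≤ (1 + |r| * Ca) / δ := by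
  have hnum : |m + r * a| ≤ 1 + |r| * Ca := by
    grw [abs_add_le, abs_mul, hm, ha]
  rw [abs_div, abs_of_pos (hδ.trans_le hnr)]
  have : 0 ≤ 1 + |r| * Ca := (abs_nonneg _).trans hnum
  gcongr

theorem abs_sub_div_mul_le {m n a b r Ca Cb δ : ℝ} (hm : |m| ≤ 1) (hn : |n| ≤ 1)
    (ha : |a| ≤ Ca) (hb : |b| ≤ Cb) (hδ : 0 < δ) (hnr : δ ≤ n + r * b) :
    |m - (m + r * a) / (n + r * b) * n| ≤ |r| * (Ca + Cb) / δ := by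
  have hpos : 0 < n + r * b := hδ.trans_le hnr
  have hnum : |m * b - a * n| ≤ Ca + Cb := by
    calc |m * b - a * n| ≤ |m| * |b| + |a| * |n| := by
          rw [← abs_mul, ← abs_mul]; exact abs_sub _ _
      _ ≤ 1 * Cb + Ca * 1 := by
          gcongr
          exact (abs_nonneg _).trans ha
      _ = Ca + Cb := by ring
  have hid : m - (m + r * a) / (n + r * b) * n = r * (m * b - a * n) / (n + r * b) := by
    field_simp; ring
  rw [hid, abs_div, abs_mul, abs_of_pos hpos]
  have : 0 ≤ Ca + Cb := (abs_nonneg _).trans hnum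
  gcongr

theorem norm_ite_one_zero_le (p : Prop) [Decidable p] : ‖if p then (1 : ℝ) else 0‖ ≤ 1 := by
  split_ifs <;> simp

section Integral

variable {Ω : Type*} [MeasurableSpace Ω] {μ : Measure Ω}

theorem integrable_ite_one_zero [IsFiniteMeasure μ] {p : Ω → Prop} [DecidablePred p]
    (hp : MeasurableSet {ω | p ω}) : Integrable (fun ω => if p ω then (1 : ℝ) else 0) μ :=
  .of_bound (Measurable.ite hp measurable_const measurable_const).aestronglyMeasurable 1
    (ae_of_all _ fun _ => norm_ite_one_zero_le _)

theorem MeasureTheory.Integrable.ite_one_zero_mul {p : Ω → Prop} [DecidablePred p]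
    (hp : MeasurableSet {ω | p ω}) {f : Ω → ℝ} (hf : Integrable f μ) :
    Integrable (fun ω => (if p ω then (1 : ℝ) else 0) * f ω) μ :=
  hf.bdd_mul (Measurable.ite hp measurable_const measurable_const).aestronglyMeasurable
    (ae_of_all _ fun _ => norm_ite_one_zero_le _)

theorem MeasureTheory.Integrable.ite_sub_mul_ite_mul {p q : Ω → Prop} [DecidablePred p]
    [DecidablePred q] (hp : MeasurableSet {ω | p ω}) (hq : MeasurableSet {ω | q ω})
    {h f : Ω → ℝ} {a : ℝ} (hh : AEStronglyMeasurable h μ) (hh_bdd : ∀ᵐ ω ∂μ, ‖h ω‖ ≤ a)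
    (hf : Integrable f μ) :
    Integrable (fun ω => ((if p ω then (1 : ℝ) else 0) - h ω * (if q ω then 1 else 0)) * f ω)
      μ :=
  ((hf.ite_one_zero_mul hp).sub ((hf.ite_one_zero_mul hq).bdd_mul hh hh_bdd)).congr
    (ae_of_all _ fun ω => by simp only [Pi.sub_apply]; ring)

theorem integral_ite_one_zero {p : Ω → Prop} [DecidablePred p] (hp : MeasurableSet {ω | p ω}) :
    ∫ ω, (if p ω then (1 : ℝ) else 0) ∂μ = (μ {ω | p ω}).toReal := by
  rw [← measureReal_def, ← integral_indicator_one hp]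
  simp [Set.indicator_apply]

theorem eventually_ae_half_le_add_mul {n Δn : Ω → ℝ} {ε Cn : ℝ} (hε : 0 < ε)
    (hn : ∀ᵐ ω ∂μ, ε ≤ n ω) (hΔn : ∀ ω, |Δn ω| ≤ Cn) :
    ∀ᶠ r in 𝓝 (0 : ℝ), ∀ᵐ ω ∂μ, ε / 2 ≤ n ω + r * Δn ω := by
  have hsmall : ∀ᶠ r in 𝓝 (0 : ℝ), |r| * Cn < ε / 2 :=
    ((continuous_abs.mul continuous_const).tendsto' 0 0 (by simp)).eventually
      (gt_mem_nhds (half_pos hε))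
  filter_upwards [hsmall] with r hr
  filter_upwards [hn] with ω hω
  have : |r * Δn ω| ≤ |r| * Cn := by
    rw [abs_mul]; exact mul_le_mul_of_nonneg_left (hΔn ω) (abs_nonneg r)
  linarith [neg_abs_le (r * Δn ω)]

theorem isBigO_sq_integral_ratio_perturbation [IsProbabilityMeasure μ]
    {m n Δg Δm Δn : Ω → ℝ} {ε Cg Cm Cn : ℝ} (hε : 0 < ε) (hm : ∀ᵐ ω ∂μ, |m ω| ≤ 1)
    (hn_le : ∀ᵐ ω ∂μ, |n ω| ≤ 1) (hn : ∀ᵐ ω ∂μ, ε ≤ n ω) (hΔg : ∀ ω, |Δg ω| ≤ Cg)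
    (hΔm : ∀ ω, |Δm ω| ≤ Cm) (hΔn : ∀ ω, |Δn ω| ≤ Cn) :
    (fun r : ℝ => ∫ ω, (m ω - (m ω + r * Δm ω) / (n ω + r * Δn ω) * n ω) * (r * Δg ω) ∂μ)
      =O[𝓝 0] fun r => r ^ 2 := by
  refine .of_bound (Cg * ((Cm + Cn) / (ε / 2))) ?_
  filter_upwards [eventually_ae_half_le_add_mul hε hn hΔn] with r hr
  refine (norm_integral_le_of_norm_le_const (C := |r| * Cg * (|r| * (Cm + Cn) / (ε / 2))) ?_
    ).trans_eq (by rw [probReal_univ, mul_one, norm_pow, Real.norm_eq_abs]; ring)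
  filter_upwards [hr, hm, hn_le] with ω hω hmω hnω
  rw [norm_mul, norm_mul, Real.norm_eq_abs, Real.norm_eq_abs, Real.norm_eq_abs, mul_comm]
  exact mul_le_mul (mul_le_mul_of_nonneg_left (hΔg ω) (abs_nonneg r))
    (abs_sub_div_mul_le hmω hnω (hΔm ω) (hΔn ω) (half_pos hε) hω) (abs_nonneg _)
    (mul_nonneg (abs_nonneg r) ((abs_nonneg _).trans (hΔg ω)))

end Integral

section CondExp

variable {Ω : Type*} {m m0 : MeasurableSpace Ω} {μ : Measure Ω}

theorem integral_mul_condExp_of_stronglyMeasurable (hm : m ≤ m0) [SigmaFinite (μ.trim hm)]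
    {f g : Ω → ℝ} (hf : StronglyMeasurable[m] f) (hfg : Integrable (f * g) μ)
    (hg : Integrable g μ) : ∫ ω, f ω * g ω ∂μ = ∫ ω, f ω * μ[g|m] ω ∂μ := by
  rw [← integral_condExp hm]
  exact integral_congr_ae (condExp_mul_of_stronglyMeasurable_left hf hfg hg)

theorem integral_mul_mul_sub_condExp_eq_zero [IsFiniteMeasure μ] (hm : m ≤ m0)
    {h W Z : Ω → ℝ} {a b : ℝ} (hh : StronglyMeasurable[m] h) (hh_bdd : ∀ᵐ ω ∂μ, ‖h ω‖ ≤ a)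
    (hW : AEStronglyMeasurable W μ) (hW_bdd : ∀ᵐ ω ∂μ, ‖W ω‖ ≤ b) (hZ : Integrable Z μ)
    (hZW : μ[Z * W|m] =ᵐ[μ] μ[Z|m] * μ[W|m]) :
    ∫ ω, h ω * (W ω * (Z ω - μ[Z|m] ω)) ∂μ = 0 := by
  have hW_int : Integrable W μ := .of_bound hW b hW_bdd
  have hZW_int : Integrable (Z * W) μ := hZ.mul_bdd hW hW_bdd
  have hhZW_int : Integrable (fun ω => h ω * (Z * W) ω) μ :=
    hZW_int.bdd_mul (hh.mono hm).aestronglyMeasurable hh_bdd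
  have hhZ : StronglyMeasurable[m] (h * μ[Z|m]) := hh.mul stronglyMeasurable_condExp
  have hhZ_W_int : Integrable (fun ω => (h * μ[Z|m]) ω * W ω) μ :=
    (integrable_condExp.bdd_mul (hh.mono hm).aestronglyMeasurable hh_bdd).mul_bdd hW hW_bdd
  have h_first : ∫ ω, h ω * (Z * W) ω ∂μ = ∫ ω, h ω * (μ[Z|m] ω * μ[W|m] ω) ∂μ := by
    rw [integral_mul_condExp_of_stronglyMeasurable hm hh hhZW_int hZW_int]
    exact integral_congr_ae (hZW.mono fun ω hω => by simp only [hω, Pi.mul_apply])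
  have h_second : ∫ ω, (h * μ[Z|m]) ω * W ω ∂μ = ∫ ω, h ω * (μ[Z|m] ω * μ[W|m] ω) ∂μ := by
    rw [integral_mul_condExp_of_stronglyMeasurable hm hhZ hhZ_W_int hW_int]
    simp only [Pi.mul_apply, mul_assoc]
  calc ∫ ω, h ω * (W ω * (Z ω - μ[Z|m] ω)) ∂μ
      = ∫ ω, h ω * (Z * W) ω - (h * μ[Z|m]) ω * W ω ∂μ :=
        integral_congr_ae (ae_of_all _ fun ω => by simp only [Pi.mul_apply]; ring)
    _ = 0 := by rw [integral_sub hhZW_int hhZ_W_int, h_first, h_second, sub_self]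

theorem integral_sub_mul_mul_eq_condExp [IsFiniteMeasure μ] (hm : m ≤ m0) {U V h γ : Ω → ℝ}
    {a c : ℝ} (hU : Integrable U μ) (hV : Integrable V μ) (hh : StronglyMeasurable[m] h)
    (hh_bdd : ∀ᵐ ω ∂μ, ‖h ω‖ ≤ a) (hγ : StronglyMeasurable[m] γ)
    (hγ_bdd : ∀ᵐ ω ∂μ, ‖γ ω‖ ≤ c) :
    ∫ ω, (U ω - h ω * V ω) * γ ω ∂μ = ∫ ω, (μ[U|m] ω - h ω * μ[V|m] ω) * γ ω ∂μ := by
  have hhγ : StronglyMeasurable[m] (γ * h) := hγ.mul hh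
  have hhγ_bdd : ∀ᵐ ω ∂μ, ‖(γ * h) ω‖ ≤ c * a := by
    filter_upwards [hγ_bdd, hh_bdd] with ω h1 h2
    rw [Pi.mul_apply, norm_mul]
    exact mul_le_mul h1 h2 (norm_nonneg _) ((norm_nonneg _).trans h1)
  have hsplit : ∀ U' V' : Ω → ℝ, Integrable U' μ → Integrable V' μ →
      ∫ ω, (U' ω - h ω * V' ω) * γ ω ∂μ
        = ∫ ω, γ ω * U' ω ∂μ - ∫ ω, (γ * h) ω * V' ω ∂μ := fun U' V' hU' hV' => by
    rw [← integral_sub (hU'.bdd_mul (hγ.mono hm).aestronglyMeasurable hγ_bdd)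
      (hV'.bdd_mul (hhγ.mono hm).aestronglyMeasurable hhγ_bdd)]
    exact integral_congr_ae (ae_of_all _ fun ω => by simp only [Pi.mul_apply]; ring)
  rw [hsplit U V hU hV, hsplit _ _ integrable_condExp integrable_condExp,
    integral_mul_condExp_of_stronglyMeasurable hm hγ
      (hU.bdd_mul (hγ.mono hm).aestronglyMeasurable hγ_bdd) hU,
    integral_mul_condExp_of_stronglyMeasurable hm hhγ
      (hV.bdd_mul (hhγ.mono hm).aestronglyMeasurable hhγ_bdd) hV]

end CondExp

section Model

variable {Ω 𝒳 : Type*} {T : ℕ} {E : Ω → ℕ} {Ye : ℕ → ℕ → Ω → ℝ} {Yinf : ℕ → Ω → ℝ}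

theorem obsY_eq_of_mem {s : ℕ} {ω : Ω} (h : E ω ∈ Finset.Icc 1 T) :
    obsY T E Ye Yinf s ω = Ye (E ω) s ω := by
  rw [obsY, Finset.sum_eq_single_of_mem (E ω) h fun e _ he => by simp [Ne.symm he]]
  simp

theorem ite_lt_eq_sum_Icc {t : ℕ} {ω : Ω} (hω : E ω ≤ T) :
    (if t < E ω then (1 : ℝ) else 0)
      = ∑ e ∈ Finset.Icc (t + 1) T, if E ω = e then (1 : ℝ) else 0 := by
  rw [Finset.sum_ite_eq]
  congr 1
  exact propext (by simp only [Finset.mem_Icc]; omega)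

/-- The doubly robust score `ψ(W; θ, η)` at the nuisance value `η = (g, m(X), n(X), M)`. -/
def drScore (T : ℕ) (E : Ω → ℕ) (Ye : ℕ → ℕ → Ω → ℝ) (Yinf : ℕ → Ω → ℝ) (e t : ℕ) (θ : ℝ)
    (g m n : Ω → ℝ) (M : ℝ) (ω : Ω) : ℝ :=
  (if E ω = e then (1 : ℝ) else 0) / M * (obsY T E Ye Yinf t ω - obsY T E Ye Yinf 0 ω - g ω)
    - (if t < E ω then (1 : ℝ) else 0) * m ω / (M * n ω)
      * (obsY T E Ye Yinf t ω - obsY T E Ye Yinf 0 ω - g ω)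
    - θ * (if E ω = e then (1 : ℝ) else 0) / M

variable [MeasurableSpace Ω] [MeasurableSpace 𝒳] {μ : Measure Ω} {X : Ω → 𝒳}

theorem integrable_obsY (hE : Measurable E) {s : ℕ}
    (hYe : ∀ e ∈ Finset.Icc 1 T, Integrable (Ye e s) μ) (hYinf : Integrable (Yinf s) μ) :
    Integrable (obsY T E Ye Yinf s) μ := by
  refine hYinf.add (integrable_finsetSum _ fun e he => ?_)
  exact ((hYe e he).sub hYinf).mul_bdd
    (Measurable.ite (hE (measurableSet_singleton e)) measurable_const
      measurable_const).aestronglyMeasurable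
    (ae_of_all _ fun _ => norm_ite_one_zero_le _)

theorem integrable_trend_sub_gZero {t : ℕ} (hYt : Integrable (Yinf t) μ)
    (hY0 : Integrable (Yinf 0) μ) :
    Integrable (fun ω => Yinf t ω - Yinf 0 ω - gZero μ Yinf X t ω) μ :=
  (hYt.sub hY0).sub integrable_condExp

theorem integral_mul_cohort_mul_trend_sub_gZero [IsFiniteMeasure μ] (hE : Measurable E)
    (hX : Measurable X) (hCPT : CPT μ T E Yinf X) {e t : ℕ} (he : e ∈ Finset.Icc 1 T)
    (ht : t ≤ T) (hYt : Integrable (Yinf t) μ) (hY0 : Integrable (Yinf 0) μ) {h : Ω → ℝ} {a : ℝ}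
    (hh : StronglyMeasurable[sigmaX X] h) (hh_bdd : ∀ᵐ ω ∂μ, ‖h ω‖ ≤ a) :
    ∫ ω, h ω * ((if E ω = e then (1 : ℝ) else 0)
      * (Yinf t ω - Yinf 0 ω - gZero μ Yinf X t ω)) ∂μ = 0 :=
  integral_mul_mul_sub_condExp_eq_zero hX.comap_le hh hh_bdd
    (Measurable.ite (hE (measurableSet_singleton e)) measurable_const
      measurable_const).aestronglyMeasurable
    (ae_of_all _ fun _ => norm_ite_one_zero_le _) (hYt.sub hY0) (hCPT e he 0 T.zero_le t ht)

theorem integral_cohort_mul_obsY_sub_gZero [IsFiniteMeasure μ] (hE : Measurable E)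
    (hX : Measurable X) (hCPT : CPT μ T E Yinf X) (hNA : NA μ T Ye Yinf) {e l t : ℕ}
    (he : e ∈ Finset.Icc 1 T) (hel : e + l = t) (ht : t ≤ T) (hYe : Integrable (Ye e t) μ)
    (hYt : Integrable (Yinf t) μ) (hY0 : Integrable (Yinf 0) μ)
    (hμe : (μ {ω | E ω = e}).toReal ≠ 0) :
    ∫ ω, (if E ω = e then (1 : ℝ) else 0)
        * (obsY T E Ye Yinf t ω - obsY T E Ye Yinf 0 ω - gZero μ Yinf X t ω) ∂μ
      = CATT μ E Ye Yinf e l * (μ {ω | E ω = e}).toReal := by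
  have hA : MeasurableSet {ω | E ω = e} := hE (measurableSet_singleton e)
  have hsplit : (fun ω => (if E ω = e then (1 : ℝ) else 0)
        * (obsY T E Ye Yinf t ω - obsY T E Ye Yinf 0 ω - gZero μ Yinf X t ω))
      =ᵐ[μ] fun ω => {ω | E ω = e}.indicator (Ye e t - Yinf t) ω
        + (if E ω = e then (1 : ℝ) else 0) * (Yinf t ω - Yinf 0 ω - gZero μ Yinf X t ω) := by
    filter_upwards [hNA e he 0 (Finset.mem_Icc.1 he).1] with ω hω
    by_cases hEω : E ω = e
    · rw [Set.indicator_of_mem (show ω ∈ {ω | E ω = e} from hEω), obsY_eq_of_mem (hEω ▸ he),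
        obsY_eq_of_mem (hEω ▸ he), hEω, hω, if_pos rfl, Pi.sub_apply]
      ring
    · simp [hEω]
  have htrend : ∫ ω, (if E ω = e then (1 : ℝ) else 0)
      * (Yinf t ω - Yinf 0 ω - gZero μ Yinf X t ω) ∂μ = 0 := by
    simpa using integral_mul_cohort_mul_trend_sub_gZero hE hX hCPT he ht hYt hY0
      stronglyMeasurable_const (ae_of_all μ fun _ => (norm_one (α := ℝ)).le)
  have hCATT : CATT μ E Ye Yinf e l * (μ {ω | E ω = e}).toReal
      = ∫ ω in {ω | E ω = e}, (Ye e t ω - Yinf t ω) ∂μ := by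
    rw [CATT, cexp, show ((e : ℤ) + l).toNat = t by omega, div_mul_cancel₀ _ hμe]
  rw [integral_congr_ae hsplit, integral_add ((hYe.sub hYt).indicator hA)
    ((integrable_trend_sub_gZero hYt hY0).ite_one_zero_mul hA), integral_indicator hA,
    htrend, add_zero, hCATT]
  rfl

theorem integral_mul_notYetTreated_mul_obsY_sub_gZero [IsFiniteMeasure μ] (hE : Measurable E)
    (hX : Measurable X) (hsupp : ∀ᵐ ω ∂μ, E ω ≤ T) (hCPT : CPT μ T E Yinf X)
    (hNA : NA μ T Ye Yinf) {t : ℕ} (ht : t ≤ T) (hYt : Integrable (Yinf t) μ)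
    (hY0 : Integrable (Yinf 0) μ) {h : Ω → ℝ} {a : ℝ} (hh : StronglyMeasurable[sigmaX X] h)
    (hh_bdd : ∀ᵐ ω ∂μ, ‖h ω‖ ≤ a) :
    ∫ ω, h ω * ((if t < E ω then (1 : ℝ) else 0)
      * (obsY T E Ye Yinf t ω - obsY T E Ye Yinf 0 ω - gZero μ Yinf X t ω)) ∂μ = 0 := by
  have hIcc : ∀ e ∈ Finset.Icc (t + 1) T, e ∈ Finset.Icc 1 T := fun e he => by
    simp only [Finset.mem_Icc] at he ⊢; omega
  have hNA_later : ∀ᵐ ω ∂μ, ∀ e ∈ Finset.Icc (t + 1) T,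
      Ye e t ω = Yinf t ω ∧ Ye e 0 ω = Yinf 0 ω := by
    refine (eventually_all_finset _).2 fun e he => ?_
    have he' := Finset.mem_Icc.1 he
    filter_upwards [hNA e (hIcc e he) t (by omega), hNA e (hIcc e he) 0 (by omega)]
      with ω h1 h2 using ⟨h1, h2⟩
  have hsum : (fun ω => h ω * ((if t < E ω then (1 : ℝ) else 0)
        * (obsY T E Ye Yinf t ω - obsY T E Ye Yinf 0 ω - gZero μ Yinf X t ω)))
      =ᵐ[μ] fun ω => ∑ e ∈ Finset.Icc (t + 1) T, h ω * ((if E ω = e then (1 : ℝ) else 0)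
        * (Yinf t ω - Yinf 0 ω - gZero μ Yinf X t ω)) := by
    filter_upwards [hsupp, hNA_later] with ω hωT hω
    rw [ite_lt_eq_sum_Icc hωT, Finset.sum_mul, Finset.mul_sum]
    refine Finset.sum_congr rfl fun e he => ?_
    by_cases hEω : E ω = e
    · rw [obsY_eq_of_mem (hEω ▸ hIcc e he), obsY_eq_of_mem (hEω ▸ hIcc e he), hEω,
        (hω e he).1, (hω e he).2]
    · simp [hEω]
  rw [integral_congr_ae hsum, integral_finsetSum]
  · exact Finset.sum_eq_zero fun e he =>
      integral_mul_cohort_mul_trend_sub_gZero hE hX hCPT (hIcc e he) ht hYt hY0 hh hh_bdd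
  · exact fun e _ => ((integrable_trend_sub_gZero hYt hY0).ite_one_zero_mul
      (hE (measurableSet_singleton e))).bdd_mul (hh.mono hX.comap_le).aestronglyMeasurable hh_bdd

theorem integrable_obsY_sub_obsY_sub_gZero (hE : Measurable E) {t : ℕ}
    (hYe : ∀ e ∈ Finset.Icc 1 T, ∀ s ≤ t, Integrable (Ye e s) μ)
    (hYinf : ∀ s ≤ t, Integrable (Yinf s) μ) :
    Integrable (fun ω => obsY T E Ye Yinf t ω - obsY T E Ye Yinf 0 ω - gZero μ Yinf X t ω) μ :=
  ((integrable_obsY hE (fun e he => hYe e he t le_rfl) (hYinf t le_rfl)).sub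
    (integrable_obsY hE (fun e he => hYe e he 0 t.zero_le) (hYinf 0 t.zero_le))).sub
    integrable_condExp

theorem integral_cohort_sub_mul_notYetTreated_mul_obsY_sub_gZero [IsFiniteMeasure μ]
    (hE : Measurable E) (hX : Measurable X) (hsupp : ∀ᵐ ω ∂μ, E ω ≤ T)
    (hCPT : CPT μ T E Yinf X) (hNA : NA μ T Ye Yinf) {e l t : ℕ} (he : e ∈ Finset.Icc 1 T)
    (hel : e + l = t) (ht : t ≤ T) (hYe : ∀ e ∈ Finset.Icc 1 T, ∀ s ≤ t, Integrable (Ye e s) μ)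
    (hYinf : ∀ s ≤ t, Integrable (Yinf s) μ) (hμe : (μ {ω | E ω = e}).toReal ≠ 0)
    {h : Ω → ℝ} {a : ℝ} (hh : StronglyMeasurable[sigmaX X] h) (hh_bdd : ∀ᵐ ω ∂μ, ‖h ω‖ ≤ a) :
    ∫ ω, ((if E ω = e then (1 : ℝ) else 0) - h ω * (if t < E ω then 1 else 0))
        * (obsY T E Ye Yinf t ω - obsY T E Ye Yinf 0 ω - gZero μ Yinf X t ω) ∂μ
      = CATT μ E Ye Yinf e l * (μ {ω | E ω = e}).toReal := by
  have hR := integrable_obsY_sub_obsY_sub_gZero (X := X) hE hYe hYinf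
  have hsplit : ∀ ω, ((if E ω = e then (1 : ℝ) else 0) - h ω * (if t < E ω then 1 else 0))
      * (obsY T E Ye Yinf t ω - obsY T E Ye Yinf 0 ω - gZero μ Yinf X t ω)
      = (if E ω = e then (1 : ℝ) else 0)
          * (obsY T E Ye Yinf t ω - obsY T E Ye Yinf 0 ω - gZero μ Yinf X t ω)
        - h ω * ((if t < E ω then 1 else 0)
          * (obsY T E Ye Yinf t ω - obsY T E Ye Yinf 0 ω - gZero μ Yinf X t ω)) :=
    fun ω => by ring
  simp_rw [hsplit]
  rw [integral_sub (hR.ite_one_zero_mul (measurableSet_eq_fun hE measurable_const))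
      ((hR.ite_one_zero_mul (measurableSet_lt measurable_const hE)).bdd_mul
        (hh.mono hX.comap_le).aestronglyMeasurable hh_bdd),
    integral_cohort_mul_obsY_sub_gZero hE hX hCPT hNA he hel ht (hYe e he t le_rfl)
      (hYinf t le_rfl) (hYinf 0 t.zero_le) hμe,
    integral_mul_notYetTreated_mul_obsY_sub_gZero hE hX hsupp hCPT hNA ht (hYinf t le_rfl)
      (hYinf 0 t.zero_le) hh hh_bdd, sub_zero]

theorem integral_drScore_gZero_add [IsFiniteMeasure μ] (hE : Measurable E) (hX : Measurable X)
    (hsupp : ∀ᵐ ω ∂μ, E ω ≤ T) (hCPT : CPT μ T E Yinf X) (hNA : NA μ T Ye Yinf) {e l t : ℕ}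
    (he : e ∈ Finset.Icc 1 T) (hel : e + l = t) (ht : t ≤ T)
    (hYe : ∀ e ∈ Finset.Icc 1 T, ∀ s ≤ t, Integrable (Ye e s) μ)
    (hYinf : ∀ s ≤ t, Integrable (Yinf s) μ) (hμe : (μ {ω | E ω = e}).toReal ≠ 0)
    {γ m n : Ω → ℝ} {c a : ℝ} (hγ : StronglyMeasurable[sigmaX X] γ)
    (hγ_bdd : ∀ᵐ ω ∂μ, ‖γ ω‖ ≤ c) (hmn : StronglyMeasurable[sigmaX X] fun ω => m ω / n ω)
    (hmn_bdd : ∀ᵐ ω ∂μ, ‖m ω / n ω‖ ≤ a) (M : ℝ) :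
    ∫ ω, drScore T E Ye Yinf e t (CATT μ E Ye Yinf e l)
        (fun ω => gZero μ Yinf X t ω + γ ω) m n M ω ∂μ
      = -M⁻¹ * ∫ ω, (mZeroX μ E X e ω - m ω / n ω * nZeroX μ E X t ω) * γ ω ∂μ := by
  have hAe : MeasurableSet {ω | E ω = e} := hE (measurableSet_singleton e)
  have hAt : MeasurableSet {ω | t < E ω} := hE measurableSet_Ioi
  have hmn' := (hmn.mono hX.comap_le).aestronglyMeasurable (μ := μ)
  have hR := integrable_obsY_sub_obsY_sub_gZero (X := X) hE hYe hYinf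
  have hγ_int : Integrable γ μ := .of_bound (hγ.mono hX.comap_le).aestronglyMeasurable c hγ_bdd
  have h_score : ∀ ω, drScore T E Ye Yinf e t (CATT μ E Ye Yinf e l)
      (fun ω => gZero μ Yinf X t ω + γ ω) m n M ω
      = M⁻¹ * (((if E ω = e then (1 : ℝ) else 0) - m ω / n ω * (if t < E ω then 1 else 0))
          * (obsY T E Ye Yinf t ω - obsY T E Ye Yinf 0 ω - gZero μ Yinf X t ω)
        - CATT μ E Ye Yinf e l * (if E ω = e then (1 : ℝ) else 0)
        - ((if E ω = e then (1 : ℝ) else 0) - m ω / n ω * (if t < E ω then 1 else 0)) * γ ω) :=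
    fun ω => by simp only [drScore, div_eq_mul_inv, mul_inv]; ring
  simp_rw [h_score]
  have hwR := hR.ite_sub_mul_ite_mul hAe hAt hmn' hmn_bdd
  have hθ := (integrable_ite_one_zero (μ := μ) hAe).const_mul (CATT μ E Ye Yinf e l)
  rw [integral_const_mul, integral_sub (hwR.sub' hθ)
      (hγ_int.ite_sub_mul_ite_mul hAe hAt hmn' hmn_bdd), integral_sub hwR hθ,
    integral_cohort_sub_mul_notYetTreated_mul_obsY_sub_gZero hE hX hsupp hCPT hNA he hel ht hYe
      hYinf hμe hmn hmn_bdd, integral_const_mul, integral_ite_one_zero hAe,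
    integral_sub_mul_mul_eq_condExp hX.comap_le (integrable_ite_one_zero hAe)
      (integrable_ite_one_zero hAt) hmn hmn_bdd hγ hγ_bdd]
  rw [sub_self, zero_sub, mul_neg, neg_mul]
  rfl

theorem ae_abs_mZeroX_le_one {e : ℕ} : ∀ᵐ ω ∂μ, |mZeroX μ E X e ω| ≤ 1 :=
  ae_bdd_abs_condExp_of_ae_bdd_abs (ae_of_all _ fun _ => norm_ite_one_zero_le _)

theorem ae_abs_nZeroX_le_one {t : ℕ} : ∀ᵐ ω ∂μ, |nZeroX μ E X t ω| ≤ 1 :=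
  ae_bdd_abs_condExp_of_ae_bdd_abs (ae_of_all _ fun _ => norm_ite_one_zero_le _)

theorem eventually_integral_drScore_perturbation_eq [IsFiniteMeasure μ] (hE : Measurable E)
    (hX : Measurable X) (hsupp : ∀ᵐ ω ∂μ, E ω ≤ T) (hCPT : CPT μ T E Yinf X)
    (hNA : NA μ T Ye Yinf) {e l t : ℕ} (he : e ∈ Finset.Icc 1 T) (hel : e + l = t) (ht : t ≤ T)
    (hYe : ∀ e ∈ Finset.Icc 1 T, ∀ s ≤ t, Integrable (Ye e s) μ)
    (hYinf : ∀ s ≤ t, Integrable (Yinf s) μ) (hμe : (μ {ω | E ω = e}).toReal ≠ 0) {ε : ℝ}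
    (hε : 0 < ε) (hn : ∀ᵐ ω ∂μ, ε ≤ nZeroX μ E X t ω) {Δg Δm Δn : Ω → ℝ} {Cg Cm Cn : ℝ}
    (hΔg : Measurable[sigmaX X] Δg) (hΔm : Measurable[sigmaX X] Δm)
    (hΔn : Measurable[sigmaX X] Δn) (hCg : ∀ ω, |Δg ω| ≤ Cg) (hCm : ∀ ω, |Δm ω| ≤ Cm)
    (hCn : ∀ ω, |Δn ω| ≤ Cn) (M ΔM : ℝ) :
    ∀ᶠ r in 𝓝 (0 : ℝ),
      ∫ ω, drScore T E Ye Yinf e t (CATT μ E Ye Yinf e l) (fun ω => gZero μ Yinf X t ω + r * Δg ω)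
          (fun ω => mZeroX μ E X e ω + r * Δm ω) (fun ω => nZeroX μ E X t ω + r * Δn ω)
          (M + r * ΔM) ω ∂μ
        = -(M + r * ΔM)⁻¹ * ∫ ω, (mZeroX μ E X e ω - (mZeroX μ E X e ω + r * Δm ω)
          / (nZeroX μ E X t ω + r * Δn ω) * nZeroX μ E X t ω) * (r * Δg ω) ∂μ := by
  filter_upwards [eventually_ae_half_le_add_mul hε hn hCn] with r hr
  have hm_meas : Measurable[sigmaX X] (mZeroX μ E X e) := stronglyMeasurable_condExp.measurable
  have hn_meas : Measurable[sigmaX X] (nZeroX μ E X t) := stronglyMeasurable_condExp.measurable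
  refine integral_drScore_gZero_add (a := (1 + |r| * Cm) / (ε / 2)) hE hX hsupp hCPT hNA he hel
    ht hYe hYinf hμe (hΔg.const_mul r).stronglyMeasurable
    (ae_of_all _ fun ω => by simpa [abs_mul] using mul_le_mul_of_nonneg_left (hCg ω) (abs_nonneg r))
    ((hm_meas.add (hΔm.const_mul r)).div (hn_meas.add (hΔn.const_mul r))).stronglyMeasurable ?_ _
  filter_upwards [hr, ae_abs_mZeroX_le_one (μ := μ) (E := E) (X := X) (e := e)] with ω hω hmω
  exact (Real.norm_eq_abs _).trans_le (abs_add_mul_div_add_mul_le hmω (hCm ω) (half_pos hε) hω)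

end Model

theorem doubly_robust_score_neyman_orthogonal_general
    {Ω 𝒳 : Type*} [MeasurableSpace Ω] [MeasurableSpace 𝒳]
    (μ : Measure Ω) [IsProbabilityMeasure μ]
    (T : ℕ)
    (E : Ω → ℕ) (hE : Measurable E)
    (hsupp : μ {ω | 1 ≤ E ω ∧ E ω ≤ T} = 1)
    (Ye : ℕ → ℕ → Ω → ℝ) (Yinf : ℕ → Ω → ℝ)
    (hL2e : ∀ e ∈ Finset.Icc 1 T, ∀ t ≤ T, MemLp (Ye e t) 2 μ)
    (hL2inf : ∀ t ≤ T, MemLp (Yinf t) 2 μ)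
    (X : Ω → 𝒳) (hX : Measurable X)
    (hCPT : CPT μ T E Yinf X) (hNA : NA μ T Ye Yinf)
    (l t : ℕ) (ht : t + 1 ≤ T)
    (he : t - l ∈ Finset.Icc 1 T)
    (ε : ℝ) (hε : 0 < ε) (hn : ∀ᵐ ω ∂μ, ε ≤ nZeroX μ E X t ω)
    (hm0 : 0 < (μ {ω | E ω = t - l}).toReal)
    (Δg Δm Δn : Ω → ℝ) (Δmbar : ℝ)
    (hΔg : Measurable[sigmaX X] Δg) (hΔm : Measurable[sigmaX X] Δm)
    (hΔn : Measurable[sigmaX X] Δn)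
    (hΔgBd : ∃ Cg, ∀ ω, |Δg ω| ≤ Cg) (hΔmBd : ∃ Cm, ∀ ω, |Δm ω| ≤ Cm)
    (hΔnBd : ∃ Cn, ∀ ω, |Δn ω| ≤ Cn) :
    HasDerivAt
      (fun r : ℝ => ∫ ω,
        ((if E ω = t - l then (1 : ℝ) else 0) / ((μ {ω' | E ω' = t - l}).toReal + r * Δmbar)
            * (obsY T E Ye Yinf t ω - obsY T E Ye Yinf 0 ω - gZero μ Yinf X t ω - r * Δg ω)
          - (if t < E ω then (1 : ℝ) else 0) * (mZeroX μ E X (t - l) ω + r * Δm ω)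
              / (((μ {ω' | E ω' = t - l}).toReal + r * Δmbar) * (nZeroX μ E X t ω + r * Δn ω))
            * (obsY T E Ye Yinf t ω - obsY T E Ye Yinf 0 ω - gZero μ Yinf X t ω - r * Δg ω)
          - CATT μ E Ye Yinf (t - l) (l : ℤ)
              * (if E ω = t - l then (1 : ℝ) else 0)
              / ((μ {ω' | E ω' = t - l}).toReal + r * Δmbar)) ∂μ)
      0 0 := by
  obtain ⟨Cg, hCg⟩ := hΔgBd
  obtain ⟨Cm, hCm⟩ := hΔmBd
  obtain ⟨Cn, hCn⟩ := hΔnBd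
  set mbar := (μ {ω | E ω = t - l}).toReal
  have het : t - l + l = t := by have := Finset.mem_Icc.1 he; omega
  have hsupp_ae : ∀ᵐ ω ∂μ, E ω ≤ T :=
    ((ae_iff_measure_eq (show MeasurableSet {ω | 1 ≤ E ω ∧ E ω ≤ T} from
      hE measurableSet_Icc).nullMeasurableSet).2 (by rw [hsupp, measure_univ])).mono
      fun _ hω => hω.2
  have hinv : (fun r : ℝ => -(mbar + r * Δmbar)⁻¹) =O[𝓝 0] fun _ => (1 : ℝ) :=
    (((tendsto_id.mul_const Δmbar).const_add mbar).inv₀ (by simpa using hm0.ne')).neg.isBigO_one ℝ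
  refine HasDerivAt.congr_of_eventuallyEq (f := fun r => ∫ ω, drScore T E Ye Yinf (t - l) t
      (CATT μ E Ye Yinf (t - l) l) (fun ω => gZero μ Yinf X t ω + r * Δg ω)
      (fun ω => mZeroX μ E X (t - l) ω + r * Δm ω) (fun ω => nZeroX μ E X t ω + r * Δn ω)
      (mbar + r * Δmbar) ω ∂μ)
    ?_ (.of_forall fun r => integral_congr_ae (ae_of_all _ fun ω => by simp only [drScore]; ring))
  refine hasDerivAt_zero_of_isBigO_sq ((hinv.mul (isBigO_sq_integral_ratio_perturbation hε
    (ae_abs_mZeroX_le_one (E := E) (X := X) (e := t - l)) ae_abs_nZeroX_le_one hn hCg hCm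
    hCn)).congr' ?_
    (.of_forall fun r => one_mul _))
  exact (eventually_integral_drScore_perturbation_eq hE hX hsupp_ae hCPT hNA he het (by omega)
    (fun e he s hs => (hL2e e he s (by omega)).integrable one_le_two)
    (fun s hs => (hL2inf s (by omega)).integrable one_le_two) hm0.ne' hε hn hΔg hΔm hΔn hCg hCm
    hCn mbar Δmbar).mono fun r hr => hr.symm

/-- Appendix C (Neyman orthogonality of the doubly robust score): perturbing the nuisance
parameters `(g₀, m₀(X), n₀(X), m₀)` in the directions `(Δg, Δm, Δn, Δm̄)`, the map
`r ↦ E[ψ(W, θ₀, η₀ + r·Δη)]` is differentiable at `r = 0` with derivative `0`. -/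
theorem doubly_robust_score_neyman_orthogonal
    {Ω 𝒳 : Type*} [MeasurableSpace Ω] [MeasurableSpace 𝒳]
    (μ : Measure Ω) [IsProbabilityMeasure μ]
    (T : ℕ) (hT : 1 ≤ T)
    (E : Ω → ℕ) (hE : Measurable E)
    (hsupp : μ {ω | 1 ≤ E ω ∧ E ω ≤ T} = 1)
    (hpos : ∀ e ∈ Finset.Icc 1 T, 0 < μ {ω | E ω = e})
    (Ye : ℕ → ℕ → Ω → ℝ) (Yinf : ℕ → Ω → ℝ)
    (hL2e : ∀ e ∈ Finset.Icc 1 T, ∀ t ≤ T, MemLp (Ye e t) 2 μ)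
    (hL2inf : ∀ t ≤ T, MemLp (Yinf t) 2 μ)
    (X : Ω → 𝒳) (hX : Measurable X)
    (hCPT : CPT μ T E Yinf X) (hNA : NA μ T Ye Yinf)
    (l t : ℕ) (hl : l ≤ t) (ht : t + 1 ≤ T)
    (he : t - l ∈ Finset.Icc 1 T)
    (ε : ℝ) (hε : 0 < ε) (hn : ∀ᵐ ω ∂μ, ε ≤ nZeroX μ E X t ω)
    (hm0 : 0 < (μ {ω | E ω = t - l}).toReal)
    (Δg Δm Δn : Ω → ℝ) (Δmbar : ℝ)
    (hΔg : Measurable[sigmaX X] Δg) (hΔm : Measurable[sigmaX X] Δm)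
    (hΔn : Measurable[sigmaX X] Δn)
    (hΔgBd : ∃ Cg, ∀ ω, |Δg ω| ≤ Cg) (hΔmBd : ∃ Cm, ∀ ω, |Δm ω| ≤ Cm)
    (hΔnBd : ∃ Cn, ∀ ω, |Δn ω| ≤ Cn) :
    HasDerivAt
      (fun r : ℝ => ∫ ω,
        ((if E ω = t - l then (1 : ℝ) else 0) / ((μ {ω' | E ω' = t - l}).toReal + r * Δmbar)
            * (obsY T E Ye Yinf t ω - obsY T E Ye Yinf 0 ω - gZero μ Yinf X t ω - r * Δg ω)
          - (if t < E ω then (1 : ℝ) else 0) * (mZeroX μ E X (t - l) ω + r * Δm ω)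
              / (((μ {ω' | E ω' = t - l}).toReal + r * Δmbar) * (nZeroX μ E X t ω + r * Δn ω))
            * (obsY T E Ye Yinf t ω - obsY T E Ye Yinf 0 ω - gZero μ Yinf X t ω - r * Δg ω)
          - CATT μ E Ye Yinf (t - l) (l : ℤ)
              * (if E ω = t - l then (1 : ℝ) else 0)
              / ((μ {ω' | E ω' = t - l}).toReal + r * Δmbar)) ∂μ)
      0 0 :=
  doubly_robust_score_neyman_orthogonal_general μ T E hE hsupp Ye Yinf hL2e hL2inf X hX hCPT hNA l t
    ht he ε hε hn hm0 Δg Δm Δn Δmbar hΔg hΔm hΔn hΔgBd hΔmBd hΔnBd
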